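/- Let h : ℝᵈ → ℝ, h(x) = ⟪e, x⟫ + Σᵢ₌₁ᵗ εᵢ·|⟪wᵢ, x⟫| with εᵢ ∈ {1,-1}, and suppose v₁, …, v_n ∈ ℝᵈ satisfy h(vᵢ) > 0 and h(−vᵢ) ≤ 0 for each i, while g₁, …, g_m ∈ ℝᵈ satisfy h(gⱼ) = 0 and h(−gⱼ) = 0 for each j. Then no nonzero nonnegative combination of the vᵢ can equal a linear combination of the gⱼ; i.e., if λᵢ ≥ 0, not all zero, and μⱼ ∈ ℝ satisfy Σᵢ λᵢ vᵢ = Σⱼ μⱼ gⱼ, we obtain a contradiction (such λ, μ do not exist). -/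

import Mathlib

open scoped RealInnerProductSpace

section

variable {E ι : Type*} [NormedAddCommGroup E] [InnerProductSpace ℝ E] [Fintype ι]

/-- The hinge terms are even, so only the linear part survives in `h x - h (-x)`. -/
theorem hinge_sub_hinge_neg {e : E} {w : ι → E} {ε : ι → ℝ} {h : E → ℝ}
    (hh : ∀ x, h x = ⟪e, x⟫ + ∑ i, ε i * |⟪w i, x⟫|) (x : E) :
    h x - h (-x) = 2 * ⟪e, x⟫ := by
  simp only [hh, inner_neg_right, abs_neg]
  ring

theorem inner_sum_smul_pos {e : E} {v : ι → E} {c : ι → ℝ} (hv : ∀ i, 0 < ⟪e, v i⟫)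
    (hc : ∀ i, 0 ≤ c i) (hc_ne : ∃ i, c i ≠ 0) : 0 < ⟪e, ∑ i, c i • v i⟫ := by
  obtain ⟨i₀, hi₀⟩ := hc_ne
  simp only [inner_sum, inner_smul_right]
  exact Finset.sum_pos' (fun i _ => mul_nonneg (hc i) (hv i).le)
    ⟨i₀, Finset.mem_univ i₀, mul_pos ((hc i₀).lt_of_ne' hi₀) (hv i₀)⟩

theorem inner_sum_smul_eq_zero {e : E} {g : ι → E} (hg : ∀ j, ⟪e, g j⟫ = 0) (c : ι → ℝ) :
    ⟪e, ∑ j, c j • g j⟫ = 0 := by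
  simp [inner_sum, inner_smul_right, hg]

end

theorem stmt19_general (d t : ℕ) (e : EuclideanSpace ℝ (Fin d))
    (w : Fin t → EuclideanSpace ℝ (Fin d)) (ε : Fin t → ℝ)
    (h : EuclideanSpace ℝ (Fin d) → ℝ)
    (hh : ∀ x, h x = (inner ℝ e x : ℝ) + ∑ i, ε i * |(inner ℝ (w i) x : ℝ)|)
    (n m : ℕ) (v : Fin n → EuclideanSpace ℝ (Fin d))
    (g : Fin m → EuclideanSpace ℝ (Fin d))
    (hv : ∀ i, 0 < h (v i) ∧ h (-(v i)) ≤ 0)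
    (hg : ∀ j, h (g j) = 0 ∧ h (-(g j)) = 0) :
    ¬ ∃ (lam : Fin n → ℝ) (mu : Fin m → ℝ),
      (∀ i, 0 ≤ lam i) ∧ (∃ i, lam i ≠ 0) ∧
      ∑ i, lam i • v i = ∑ j, mu j • g j := by
  rintro ⟨lam, mu, hlam, hlam_ne, heq⟩
  have hev : ∀ i, 0 < ⟪e, v i⟫ := fun i => by
    linarith [hinge_sub_hinge_neg hh (v i), hv i]
  have heg : ∀ j, ⟪e, g j⟫ = 0 := fun j => by
    linarith [hinge_sub_hinge_neg hh (g j), hg j]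
  have hpos := inner_sum_smul_pos hev hlam hlam_ne
  rw [heq, inner_sum_smul_eq_zero heg mu] at hpos
  exact lt_irrefl 0 hpos

theorem stmt19 (d t : ℕ) (e : EuclideanSpace ℝ (Fin d))
    (w : Fin t → EuclideanSpace ℝ (Fin d)) (ε : Fin t → ℝ)
    (hε : ∀ i, ε i = 1 ∨ ε i = -1)
    (h : EuclideanSpace ℝ (Fin d) → ℝ)
    (hh : ∀ x, h x = (inner ℝ e x : ℝ) + ∑ i, ε i * |(inner ℝ (w i) x : ℝ)|)
    (n m : ℕ) (v : Fin n → EuclideanSpace ℝ (Fin d))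
    (g : Fin m → EuclideanSpace ℝ (Fin d))
    (hv : ∀ i, 0 < h (v i) ∧ h (-(v i)) ≤ 0)
    (hg : ∀ j, h (g j) = 0 ∧ h (-(g j)) = 0) :
    ¬ ∃ (lam : Fin n → ℝ) (mu : Fin m → ℝ),
      (∀ i, 0 ≤ lam i) ∧ (∃ i, lam i ≠ 0) ∧
      ∑ i, lam i • v i = ∑ j, mu j • g j :=
  stmt19_general d t e w ε h hh n m v g hv hg
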